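/- The distribution of y·x has Poincaré constant Ω(d): Let x ∼ N(0, I_d) and y ∼ N(0,1) be independent, set z = y·x ∈ ℝ^d, and let f(z) = ‖z‖₂². Then Var(f(z)) = E[y⁴‖x‖₂⁴] − (E[y²‖x‖₂²])² = 2d² + 6d and E[‖∇f(z)‖₂²] = E[4 y² ‖x‖₂²] = 4d, so that Var(f(z)) = ((d+3)/2) · E[‖∇f(z)‖₂²]. -/

import Mathlib

open MeasureTheory Matrix
open scoped BigOperators ENNReal NNReal

noncomputable section

/-- Squared Euclidean norm of a vector in `ℝ^d`. -/
def enormSq {d : ℕ} (x : Fin d → ℝ) : ℝ := ∑ i, x i ^ 2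

/-- Euclidean norm of a vector in `ℝ^d`. -/
def euclNorm {d : ℕ} (x : Fin d → ℝ) : ℝ := Real.sqrt (enormSq x)

/-- Frobenius norm of a matrix. -/
def frobNorm {m n : ℕ} (A : Matrix (Fin m) (Fin n) ℝ) : ℝ :=
  Real.sqrt (∑ i, ∑ j, A i j ^ 2)

/-- Spectral norm (ℓ₂ operator norm) of a square matrix. -/
def specNorm {d : ℕ} (A : Matrix (Fin d) (Fin d) ℝ) : ℝ :=
  ‖Matrix.toEuclideanCLM (𝕜 := ℝ) A‖

/-- Nuclear norm: the sum of the singular values. -/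
def nucNorm {d : ℕ} (A : Matrix (Fin d) (Fin d) ℝ) : ℝ :=
  ∑ i, Real.sqrt (((show (Aᵀ * A).IsHermitian by
    simpa [Matrix.conjTranspose_eq_transpose_of_trivial] using
      Matrix.isHermitian_conjTranspose_mul_self A)).eigenvalues i)

open scoped Classical in
/-- Best rank-`k` approximation of a symmetric matrix: keep the `k` largest eigenvalues
(ties broken by index) in an eigendecomposition; junk value `0` on non-symmetric input. -/
def Pk {d : ℕ} (k : ℕ) (A : Matrix (Fin d) (Fin d) ℝ) : Matrix (Fin d) (Fin d) ℝ :=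
  if hA : A.IsHermitian then
    (hA.eigenvectorUnitary : Matrix (Fin d) (Fin d) ℝ) *
      Matrix.diagonal (fun i =>
        if (Finset.univ.filter fun j =>
              hA.eigenvalues i < hA.eigenvalues j ∨
                (hA.eigenvalues i = hA.eigenvalues j ∧ j < i)).card < k
        then hA.eigenvalues i else 0) *
      star (hA.eigenvectorUnitary : Matrix (Fin d) (Fin d) ℝ)
  else 0

/-- A `d × k` matrix is semi-orthogonal if `Vᵀ V = I_k`. -/
def IsSemiOrtho {d k : ℕ} (V : Matrix (Fin d) (Fin k) ℝ) : Prop := Vᵀ * V = 1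

/-- `U` is a matrix of top-`k` singular vectors of the positive semidefinite matrix `M`:
it is semi-orthogonal and maximizes `Tr(Vᵀ M V)` among semi-orthogonal matrices. -/
def IsTopKSingular {d k : ℕ} (M : Matrix (Fin d) (Fin d) ℝ)
    (U : Matrix (Fin d) (Fin k) ℝ) : Prop :=
  IsSemiOrtho U ∧ ∀ V : Matrix (Fin d) (Fin k) ℝ, IsSemiOrtho V →
    (Vᵀ * M * V).trace ≤ (Uᵀ * M * U).trace

/-- `s` is an `α`-corruption of the sample `g`: as multisets, `s = (g \ L) ∪ E`
with `L ⊆ g` and `|E| = |L| ≤ α n`. -/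
def IsCorruptionOf {V : Type*} (α : ℝ) {n : ℕ} (g s : Fin n → V) : Prop :=
  ∃ L E : Multiset V, L ≤ (List.ofFn g : Multiset V) ∧
    Multiset.card E = Multiset.card L ∧ (Multiset.card L : ℝ) ≤ α * n ∧
    (List.ofFn s : Multiset V) + L = (List.ofFn g : Multiset V) + E

/-- The standard Gaussian measure `N(0, I_d)` on `ℝ^d`. -/
def stdGaussian (d : ℕ) : Measure (Fin d → ℝ) :=
  Measure.pi fun _ => ProbabilityTheory.gaussianReal 0 1

/-- Total variation distance between two measures. -/
def tvDist {Ω : Type*} [MeasurableSpace Ω] (μ ν : Measure Ω) : ℝ :=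
  ⨆ s : Set Ω, |(μ s).toReal - (ν s).toReal|
/-- Matrices over `ℝ` carry the Borel (product) σ-algebra. -/
instance matrixMeasurableSpace {m n : ℕ} : MeasurableSpace (Matrix (Fin m) (Fin n) ℝ) :=
  (inferInstance : MeasurableSpace (Fin m → Fin n → ℝ))

/-!
By independence every integral splits into a moment of `‖x‖²` times a moment of `y`.
The Gamma integral gives the Gaussian moments `E y^(2k) = (2k-1)‼`, so `E y² = 1`, `E y⁴ = 3`
and `Var y² = 2`. Since `‖x‖²` is a sum of `d` independent copies of `y²`, `E‖x‖² = d` and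
`Var ‖x‖² = 2d`, hence `E‖x‖⁴ = d² + 2d`. Thus `E[y⁴‖x‖⁴] = 3(d² + 2d)`, `E[y²‖x‖²] = d` and
`E[4y²‖x‖²] = 4d`, and the three identities are arithmetic.
-/

open Real
open scoped Nat ProbabilityTheory

namespace ProbabilityTheory

lemma integrable_pow_gaussianReal (μ : ℝ) (v : ℝ≥0) (n : ℕ) :
    Integrable (fun x => x ^ n) (gaussianReal μ v) := by
  rcases eq_or_ne n 0 with rfl | hn
  · simp
  refine ((memLp_id_gaussianReal (μ := μ) (v := v) n).integrable_norm_pow hn).mono'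
    (by fun_prop) (ae_of_all _ fun x => ?_)
  simp [norm_pow]

lemma integral_pow_two_mul_mul_exp_neg_half_sq (k : ℕ) :
    ∫ x : ℝ, x ^ (2 * k) * exp (-x ^ 2 / 2) = √(2 * π) * (2 * k - 1 : ℕ)‼ := by
  have h_half := integral_rpow_mul_exp_neg_mul_rpow (p := 2) (q := (2 * k : ℕ)) (b := 1 / 2)
    two_pos (neg_one_lt_zero.trans_le (Nat.cast_nonneg _)) (by norm_num)
  have h_pow : ((1 / 2 : ℝ) ^ (-(((2 * k : ℕ) : ℝ) + 1) / 2)) = 2 ^ k * √2 := by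
    rw [one_div, inv_rpow zero_le_two, ← rpow_neg zero_le_two, sqrt_eq_rpow,
      ← rpow_natCast, ← rpow_add two_pos]
    congr 1; push_cast; ring
  have h_gamma : Gamma ((((2 * k : ℕ) : ℝ) + 1) / 2) = (2 * k - 1 : ℕ)‼ * √π / 2 ^ k := by
    rw [← Gamma_nat_add_half]; congr 1; push_cast; ring
  calc ∫ x : ℝ, x ^ (2 * k) * exp (-x ^ 2 / 2)
      = ∫ x : ℝ, |x| ^ (2 * k) * exp (-(1 / 2) * |x| ^ 2) := by
        congr 1; ext x; rw [pow_mul, pow_mul, sq_abs]; ring_nf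
    _ = 2 * ∫ x in Set.Ioi (0 : ℝ), x ^ ((2 * k : ℕ) : ℝ) * exp (-(1 / 2) * x ^ (2 : ℝ)) := by
        rw [integral_comp_abs (f := fun x => x ^ (2 * k) * exp (-(1 / 2) * x ^ 2))]
        simp only [rpow_natCast, rpow_two]
    _ = √(2 * π) * (2 * k - 1 : ℕ)‼ := by
        rw [h_half, h_pow, h_gamma, sqrt_mul zero_le_two]
        field_simp

lemma integral_pow_two_mul_gaussianReal (k : ℕ) :
    ∫ x, x ^ (2 * k) ∂gaussianReal 0 1 = (2 * k - 1 : ℕ)‼ := by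
  have hπ : √(2 * π) ≠ 0 := by positivity
  simp_rw [integral_gaussianReal_eq_integral_smul one_ne_zero, gaussianPDFReal_def, smul_eq_mul,
    mul_assoc, integral_const_mul, NNReal.coe_one, mul_one, sub_zero, mul_comm (exp _),
    integral_pow_two_mul_mul_exp_neg_half_sq, ← mul_assoc, inv_mul_cancel₀ hπ, one_mul]

lemma integral_sq_gaussianReal : ∫ x, x ^ 2 ∂gaussianReal 0 1 = 1 := by
  simpa using integral_pow_two_mul_gaussianReal 1

lemma integral_pow_four_gaussianReal : ∫ x, x ^ 4 ∂gaussianReal 0 1 = 3 := by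
  simpa [Nat.doubleFactorial] using integral_pow_two_mul_gaussianReal 2

lemma memLp_sq_gaussianReal : MemLp (fun x : ℝ => x ^ 2) 2 (gaussianReal 0 1) :=
  (memLp_two_iff_integrable_sq (by fun_prop)).2 <| by
    simpa only [← pow_mul] using integrable_pow_gaussianReal 0 1 (2 * 2)

lemma variance_sq_gaussianReal : Var[fun x : ℝ => x ^ 2; gaussianReal 0 1] = 2 := by
  rw [variance_eq_sub memLp_sq_gaussianReal]
  simp only [Pi.pow_apply, ← pow_mul, integral_sq_gaussianReal, integral_pow_four_gaussianReal]
  norm_num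

section StandardGaussianVector

variable {ι : Type*} [Fintype ι]

lemma memLp_sq_eval_pi_gaussianReal (i : ι) :
    MemLp (fun x : ι → ℝ => x i ^ 2) 2 (Measure.pi fun _ => gaussianReal 0 1) :=
  memLp_sq_gaussianReal.comp_measurePreserving (measurePreserving_eval _ i)

lemma memLp_sum_sq_pi_gaussianReal :
    MemLp (fun x : ι → ℝ => ∑ i, x i ^ 2) 2 (Measure.pi fun _ => gaussianReal 0 1) :=
  memLp_finsetSum _ fun i _ => memLp_sq_eval_pi_gaussianReal i

lemma integral_sum_sq_pi_gaussianReal :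
    ∫ x : ι → ℝ, ∑ i, x i ^ 2 ∂Measure.pi (fun _ => gaussianReal 0 1) = Fintype.card ι := by
  rw [integral_finsetSum _ fun i _ =>
    (memLp_sq_eval_pi_gaussianReal i).integrable one_le_two]
  simp [integral_comp_eval (X := fun _ : ι => ℝ) (f := fun t : ℝ => t ^ 2) (by fun_prop),
    integral_sq_gaussianReal]

lemma variance_sum_sq_pi_gaussianReal :
    Var[fun x : ι → ℝ => ∑ i, x i ^ 2; Measure.pi fun _ => gaussianReal 0 1]
      = 2 * Fintype.card ι := by
  have h := variance_sum_pi (μ := fun _ : ι => gaussianReal 0 1) (X := fun _ t => t ^ 2)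
    fun _ => memLp_sq_gaussianReal
  simp only [variance_sq_gaussianReal, Finset.sum_const, Finset.card_univ, nsmul_eq_mul] at h
  rw [mul_comm, ← h]
  congr 1
  ext x
  simp

lemma integral_sum_sq_sq_pi_gaussianReal :
    ∫ x : ι → ℝ, (∑ i, x i ^ 2) ^ 2 ∂Measure.pi (fun _ => gaussianReal 0 1)
      = (Fintype.card ι : ℝ) ^ 2 + 2 * Fintype.card ι := by
  have h := variance_eq_sub (memLp_sum_sq_pi_gaussianReal (ι := ι))
  rw [variance_sum_sq_pi_gaussianReal, integral_sum_sq_pi_gaussianReal] at h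
  simp only [Pi.pow_apply] at h
  linarith

end StandardGaussianVector

end ProbabilityTheory

instance isProbabilityMeasure_stdGaussian (d : ℕ) : IsProbabilityMeasure (stdGaussian d) := by
  unfold stdGaussian; infer_instance

lemma integral_enormSq_stdGaussian (d : ℕ) : ∫ x, enormSq x ∂stdGaussian d = d := by
  unfold enormSq stdGaussian
  simpa only [Fintype.card_fin] using
    ProbabilityTheory.integral_sum_sq_pi_gaussianReal (ι := Fin d)

lemma integral_enormSq_sq_stdGaussian (d : ℕ) :
    ∫ x, enormSq x ^ 2 ∂stdGaussian d = (d : ℝ) ^ 2 + 2 * d := by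
  unfold enormSq stdGaussian
  simpa only [Fintype.card_fin] using
    ProbabilityTheory.integral_sum_sq_sq_pi_gaussianReal (ι := Fin d)

/-- **The distribution of `y·x` has Poincaré constant `Ω(d)`.** For independent
`x ∼ N(0, I_d)`, `y ∼ N(0,1)`, `z = y·x` and `f(z) = ‖z‖₂²` (so that
`f(z) = y²‖x‖₂²`, `‖∇f(z)‖₂² = 4y²‖x‖₂²`):
`Var(f(z)) = E[y⁴‖x‖₂⁴] − (E[y²‖x‖₂²])² = 2d² + 6d`, `E[‖∇f(z)‖₂²] = 4d`, and
`Var(f(z)) = ((d+3)/2)·E[‖∇f(z)‖₂²]`. -/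
theorem yx_poincare_constant (d : ℕ) :
    (let μ := (stdGaussian d).prod (ProbabilityTheory.gaussianReal 0 1)
    ((∫ q : (Fin d → ℝ) × ℝ, q.2 ^ 4 * enormSq q.1 ^ 2 ∂μ) -
        (∫ q : (Fin d → ℝ) × ℝ, q.2 ^ 2 * enormSq q.1 ∂μ) ^ 2 =
      2 * (d : ℝ) ^ 2 + 6 * d) ∧
      (∫ q : (Fin d → ℝ) × ℝ, 4 * q.2 ^ 2 * enormSq q.1 ∂μ) = 4 * (d : ℝ) ∧
      (∫ q : (Fin d → ℝ) × ℝ, q.2 ^ 4 * enormSq q.1 ^ 2 ∂μ) -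
          (∫ q : (Fin d → ℝ) × ℝ, q.2 ^ 2 * enormSq q.1 ∂μ) ^ 2 =
        (((d : ℝ) + 3) / 2) * ∫ q : (Fin d → ℝ) × ℝ, 4 * q.2 ^ 2 * enormSq q.1 ∂μ) := by
  intro μ
  have h_split (k : ℕ) (g : (Fin d → ℝ) → ℝ) :
      ∫ q : (Fin d → ℝ) × ℝ, q.2 ^ k * g q.1 ∂μ
        = (∫ x, g x ∂stdGaussian d) * ∫ y, y ^ k ∂ProbabilityTheory.gaussianReal 0 1 := by
    simp_rw [mul_comm (_ ^ k)]
    exact integral_prod_mul g (· ^ k)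
  have h_fourth :
      ∫ q : (Fin d → ℝ) × ℝ, q.2 ^ 4 * enormSq q.1 ^ 2 ∂μ = 3 * ((d : ℝ) ^ 2 + 2 * d) := by
    rw [h_split 4 (enormSq · ^ 2), integral_enormSq_sq_stdGaussian,
      ProbabilityTheory.integral_pow_four_gaussianReal, mul_comm]
  have h_second : ∫ q : (Fin d → ℝ) × ℝ, q.2 ^ 2 * enormSq q.1 ∂μ = d := by
    rw [h_split 2 enormSq, integral_enormSq_stdGaussian,
      ProbabilityTheory.integral_sq_gaussianReal, mul_one]
  have h_grad : ∫ q : (Fin d → ℝ) × ℝ, 4 * q.2 ^ 2 * enormSq q.1 ∂μ = 4 * (d : ℝ) := by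
    simp_rw [mul_assoc]
    rw [integral_const_mul, h_second]
  refine ⟨?_, h_grad, ?_⟩
  · rw [h_fourth, h_second]; ring
  · rw [h_fourth, h_second, h_grad]; ring

end
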